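/- arXiv:2502.14210 — 6 statements merged into one kernel-verified Lean document; each statement's English description precedes it below -/
import Mathlib

section
/- Let A ∈ ℝ^{n×n}, B ∈ ℝ^{n×m}, Q ∈ ℝ^{n×n} and R ∈ ℝ^{m×m} symmetric positive definite, and suppose P* ≻ 0 satisfies the ARE P* = AᵀP*A − AᵀP*B(R + BᵀP*B)^{-1}BᵀP*A + Q. Set Ā := A − B(R + BᵀP*B)^{-1}BᵀP*A. If P' is a symmetric matrix with P' ⪰ P* and P := Q + Aᵀ(P' − P'B(R + BᵀP'B)^{-1}BᵀP')A is one step of the Riccati recursion applied to P', then 0 ⪯ P − P* ⪯ Āᵀ(P' − P*)Ā (Loewner order). -/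
open Matrix BigOperators MeasureTheory

/-- Spectral norm (operator norm induced by Euclidean norms). -/
noncomputable def sNorm {m n : ℕ} (M : Matrix (Fin m) (Fin n) ℝ) : ℝ :=
  ‖LinearMap.toContinuousLinearMap (Matrix.toEuclideanLin M)‖

/-- Frobenius norm. -/
noncomputable def fNorm {m n : ℕ} (M : Matrix (Fin m) (Fin n) ℝ) : ℝ :=
  Real.sqrt (∑ i, ∑ j, (M i j) ^ 2)

/-- `P`-induced norm: `‖X‖_P = sup_{z ≠ 0} √(zᵀXᵀPXz / zᵀPz)`. -/
noncomputable def pNorm {n : ℕ} (P X : Matrix (Fin n) (Fin n) ℝ) : ℝ :=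
  ⨆ z : {v : Fin n → ℝ // v ≠ 0},
    Real.sqrt ((z.1 ⬝ᵥ (Xᵀ * P * X).mulVec z.1) / (z.1 ⬝ᵥ P.mulVec z.1))

/-- Smallest eigenvalue of a symmetric matrix (as a Rayleigh-quotient infimum). -/
noncomputable def lamMin {n : ℕ} (M : Matrix (Fin n) (Fin n) ℝ) : ℝ :=
  ⨅ v : {v : Fin n → ℝ // v ⬝ᵥ v = 1}, v.1 ⬝ᵥ M.mulVec v.1

/-- Largest eigenvalue of a symmetric matrix (as a Rayleigh-quotient supremum). -/
noncomputable def lamMax {n : ℕ} (M : Matrix (Fin n) (Fin n) ℝ) : ℝ :=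
  ⨆ v : {v : Fin n → ℝ // v ⬝ᵥ v = 1}, v.1 ⬝ᵥ M.mulVec v.1

/-- Condition number `κ_M = λ_max(M)/λ_min(M)`. -/
noncomputable def condNum {n : ℕ} (M : Matrix (Fin n) (Fin n) ℝ) : ℝ :=
  lamMax M / lamMin M

/-- Smallest singular value. -/
noncomputable def sigMin {m n : ℕ} (M : Matrix (Fin m) (Fin n) ℝ) : ℝ :=
  Real.sqrt (lamMin (Mᵀ * M))

/-- Spectral radius: supremum of moduli of (complex) eigenvalues. -/
noncomputable def specRad {n : ℕ} (M : Matrix (Fin n) (Fin n) ℝ) : ℝ :=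
  ⨆ μ : spectrum ℂ (M.map ((↑) : ℝ → ℂ)), ‖μ.1‖

/-!
For a fixed gain `K`, the closed-loop operator `Q + (A - BK)ᵀ P (A - BK) + Kᵀ R K` is affine in `P`,
and completing the square in `K` shows that `riccati P` equals it at every `K` up to the square
`(K - L_P)ᵀ (R + BᵀPB) (K - L_P)` around the optimal gain `L_P`. Evaluating `riccati P'` at its own
gain and `riccati P*` at the gain of `P'` gives `P - P*` as a sum of two positive semidefinite
terms; swapping the roles, with `Ā = A - B L_{P*}`, gives the gap `Āᵀ(P' - P*)Ā - (P - P*)` as the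
square `(L_{P*} - L_{P'})ᵀ (R + BᵀP'B) (L_{P*} - L_{P'})`.
-/

section Riccati

variable {ι κ α : Type*} [Fintype ι] [Fintype κ] [CommRing α]
  (A : Matrix ι ι α) (B : Matrix ι κ α) (Q : Matrix ι ι α) (R : Matrix κ κ α)

def closedLoopRiccati (K : Matrix κ ι α) (P : Matrix ι ι α) : Matrix ι ι α :=
  Q + (A - B * K)ᵀ * P * (A - B * K) + Kᵀ * R * K

lemma closedLoopRiccati_sub_closedLoopRiccati (K : Matrix κ ι α) (P₁ P₂ : Matrix ι ι α) :
    closedLoopRiccati A B Q R K P₁ - closedLoopRiccati A B Q R K P₂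
      = (A - B * K)ᵀ * (P₁ - P₂) * (A - B * K) := by
  simp only [closedLoopRiccati, Matrix.mul_sub, Matrix.sub_mul]
  abel

variable [DecidableEq κ]

noncomputable def riccati (P : Matrix ι ι α) : Matrix ι ι α :=
  Q + Aᵀ * (P - P * B * (R + Bᵀ * P * B)⁻¹ * Bᵀ * P) * A

noncomputable def riccatiGain (P : Matrix ι ι α) : Matrix κ ι α :=
  (R + Bᵀ * P * B)⁻¹ * (Bᵀ * P * A)

variable {B R}

/-- Completion of squares in the gain `K`. -/
lemma riccati_eq_closedLoopRiccati_sub {P : Matrix ι ι α} (hP : P.IsSymm) (hR : R.IsSymm)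
    (hS : IsUnit (R + Bᵀ * P * B).det) (K : Matrix κ ι α) :
    riccati A B Q R P = closedLoopRiccati A B Q R K P
      - (K - riccatiGain A B R P)ᵀ * (R + Bᵀ * P * B) * (K - riccatiGain A B R P) := by
  set S := R + Bᵀ * P * B
  set L := riccatiGain A B R P
  have hSL : S * L = Bᵀ * P * A := by
    rw [show L = S⁻¹ * (Bᵀ * P * A) from rfl, ← Matrix.mul_assoc, Matrix.mul_nonsing_inv _ hS, Matrix.one_mul]
  have hST : Sᵀ = S := by
    simp only [S, transpose_add, transpose_mul, transpose_transpose, hP.eq, hR.eq,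
      Matrix.mul_assoc]
  have hLS : Lᵀ * S = Aᵀ * P * B := by
    rw [← hST, ← transpose_mul, hSL]
    simp only [transpose_mul, transpose_transpose, hP.eq, Matrix.mul_assoc]
  calc riccati A B Q R P = Q + Aᵀ * P * A - Aᵀ * P * B * L := by
        simp only [riccati, L, riccatiGain, Matrix.mul_sub, Matrix.sub_mul, Matrix.mul_assoc]
        abel
    _ = closedLoopRiccati A B Q R K P
          - (Kᵀ * S * K - Kᵀ * (S * L) - Lᵀ * S * K + Lᵀ * S * L) := by
        rw [hSL, hLS]
        simp only [closedLoopRiccati, S, transpose_sub, transpose_mul, Matrix.mul_sub,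
          Matrix.sub_mul, Matrix.mul_add, Matrix.add_mul, Matrix.mul_assoc]
        abel
    _ = closedLoopRiccati A B Q R K P - (K - L)ᵀ * S * (K - L) := by
        simp only [transpose_sub, Matrix.mul_sub, Matrix.sub_mul, Matrix.mul_assoc]
        abel

lemma riccati_eq_closedLoopRiccati_riccatiGain {P : Matrix ι ι α} (hP : P.IsSymm)
    (hR : R.IsSymm) (hS : IsUnit (R + Bᵀ * P * B).det) :
    riccati A B Q R P = closedLoopRiccati A B Q R (riccatiGain A B R P) P := by
  simp [riccati_eq_closedLoopRiccati_sub A Q hP hR hS (riccatiGain A B R P)]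

lemma riccati_sub_riccati {P₁ P₂ : Matrix ι ι α} (hP₁ : P₁.IsSymm) (hP₂ : P₂.IsSymm)
    (hR : R.IsSymm) (hS₁ : IsUnit (R + Bᵀ * P₁ * B).det) (hS₂ : IsUnit (R + Bᵀ * P₂ * B).det) :
    riccati A B Q R P₁ - riccati A B Q R P₂
      = (A - B * riccatiGain A B R P₁)ᵀ * (P₁ - P₂) * (A - B * riccatiGain A B R P₁)
        + (riccatiGain A B R P₁ - riccatiGain A B R P₂)ᵀ * (R + Bᵀ * P₂ * B)
          * (riccatiGain A B R P₁ - riccatiGain A B R P₂) := by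
  rw [riccati_eq_closedLoopRiccati_riccatiGain A Q hP₁ hR hS₁,
    riccati_eq_closedLoopRiccati_sub A Q hP₂ hR hS₂ (riccatiGain A B R P₁), sub_sub_eq_add_sub,
    add_sub_right_comm, closedLoopRiccati_sub_closedLoopRiccati]

end Riccati

section Real

variable {ι κ : Type*} [Fintype ι] [Fintype κ]

lemma Matrix.PosSemidef.transpose_mul_mul_same {P : Matrix ι ι ℝ} (hP : P.PosSemidef)
    (M : Matrix ι κ ℝ) : (Mᵀ * P * M).PosSemidef := by
  simpa using hP.conjTranspose_mul_mul_same M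

lemma Matrix.PosDef.add_transpose_mul_mul_same {R : Matrix κ κ ℝ} {P : Matrix ι ι ℝ}
    (hR : R.PosDef) (hP : P.PosSemidef) (B : Matrix ι κ ℝ) : (R + Bᵀ * P * B).PosDef :=
  hR.add_posSemidef (hP.transpose_mul_mul_same B)

end Real

theorem riccati_step_monotone_general {n m : ℕ}
    (A : Matrix (Fin n) (Fin n) ℝ) (B : Matrix (Fin n) (Fin m) ℝ)
    (Q : Matrix (Fin n) (Fin n) ℝ) (R : Matrix (Fin m) (Fin m) ℝ)
    (hR : R.PosDef)
    (Pstar : Matrix (Fin n) (Fin n) ℝ) (hPstar : Pstar.PosDef)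
    (hARE : Pstar = Aᵀ * Pstar * A
      - Aᵀ * Pstar * B * (R + Bᵀ * Pstar * B)⁻¹ * Bᵀ * Pstar * A + Q)
    (Abar : Matrix (Fin n) (Fin n) ℝ)
    (hAbar : Abar = A - B * ((R + Bᵀ * Pstar * B)⁻¹ * (Bᵀ * Pstar * A)))
    (P' : Matrix (Fin n) (Fin n) ℝ)
    (hP'ge : (P' - Pstar).PosSemidef)
    (P : Matrix (Fin n) (Fin n) ℝ)
    (hP : P = Q + Aᵀ * (P' - P' * B * (R + Bᵀ * P' * B)⁻¹ * Bᵀ * P') * A) :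
    (P - Pstar).PosSemidef ∧ (Abarᵀ * (P' - Pstar) * Abar - (P - Pstar)).PosSemidef := by
  have hP'psd : P'.PosSemidef := by simpa using hPstar.posSemidef.add hP'ge
  have hS'pd := hR.add_transpose_mul_mul_same hP'psd B
  have hSstar_pd := hR.add_transpose_mul_mul_same hPstar.posSemidef B
  have hsymm {M : Matrix (Fin n) (Fin n) ℝ} (hM : M.PosSemidef) : M.IsSymm := by
    simpa using hM.isHermitian
  have hRsymm : R.IsSymm := by simpa using hR.isHermitian
  have hunit {S : Matrix (Fin m) (Fin m) ℝ} (hS : S.PosDef) : IsUnit S.det :=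
    (isUnit_iff_isUnit_det S).mp hS.isUnit
  have hfix : riccati A B Q R Pstar = Pstar := by
    conv_rhs => rw [hARE]
    simp only [riccati, Matrix.mul_sub, Matrix.sub_mul, Matrix.mul_assoc]
    abel
  have hdiff : P - Pstar = riccati A B Q R P' - riccati A B Q R Pstar := by
    rw [hfix, hP, riccati]
  have hstep := riccati_sub_riccati A Q (hsymm hP'psd) (hsymm hPstar.posSemidef) hRsymm
    (hunit hS'pd) (hunit hSstar_pd)
  have hstep_swap := riccati_sub_riccati A Q (hsymm hPstar.posSemidef) (hsymm hP'psd) hRsymm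
    (hunit hSstar_pd) (hunit hS'pd)
  have hgap : Abarᵀ * (P' - Pstar) * Abar - (P - Pstar)
      = (riccatiGain A B R Pstar - riccatiGain A B R P')ᵀ * (R + Bᵀ * P' * B)
          * (riccatiGain A B R Pstar - riccatiGain A B R P') := by
    have hAbar' : Abar = A - B * riccatiGain A B R Pstar := hAbar
    rw [hdiff, ← neg_sub (riccati A B Q R Pstar), hstep_swap, hAbar', ← neg_sub Pstar P',
      Matrix.mul_neg, Matrix.neg_mul]
    abel
  rw [hgap, hdiff, hstep]
  exact ⟨(hP'ge.transpose_mul_mul_same _).add (hSstar_pd.posSemidef.transpose_mul_mul_same _),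
    hS'pd.posSemidef.transpose_mul_mul_same _⟩

/-- One step of the Riccati recursion applied to `P' ⪰ P*` stays above `P*`
and contracts through `Ā`: `0 ⪯ P − P* ⪯ Āᵀ(P' − P*)Ā`. -/
theorem riccati_step_monotone {n m : ℕ}
    (A : Matrix (Fin n) (Fin n) ℝ) (B : Matrix (Fin n) (Fin m) ℝ)
    (Q : Matrix (Fin n) (Fin n) ℝ) (R : Matrix (Fin m) (Fin m) ℝ)
    (hQ : Q.PosDef) (hR : R.PosDef)
    (Pstar : Matrix (Fin n) (Fin n) ℝ) (hPstar : Pstar.PosDef)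
    (hARE : Pstar = Aᵀ * Pstar * A
      - Aᵀ * Pstar * B * (R + Bᵀ * Pstar * B)⁻¹ * Bᵀ * Pstar * A + Q)
    (Abar : Matrix (Fin n) (Fin n) ℝ)
    (hAbar : Abar = A - B * ((R + Bᵀ * Pstar * B)⁻¹ * (Bᵀ * Pstar * A)))
    (P' : Matrix (Fin n) (Fin n) ℝ) (hP'symm : P'.IsSymm)
    (hP'ge : (P' - Pstar).PosSemidef)
    (P : Matrix (Fin n) (Fin n) ℝ)
    (hP : P = Q + Aᵀ * (P' - P' * B * (R + Bᵀ * P' * B)⁻¹ * Bᵀ * P') * A) :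
    (P - Pstar).PosSemidef ∧ (Abarᵀ * (P' - Pstar) * Abar - (P - Pstar)).PosSemidef :=
  riccati_step_monotone_general A B Q R hR Pstar hPstar hARE Abar hAbar P' hP'ge P hP
end

section
/- Let Q ∈ ℝ^{n×n}, R ∈ ℝ^{m×m}, and Σ₀ ∈ ℝ^{n×n} be symmetric positive definite, let P̃ ∈ ℝ^{n×n} be symmetric positive semidefinite, and let A ∈ ℝ^{n×n}, B ∈ ℝ^{n×m}. Define J̃(K) := tr((Q + KᵀRK + (A − BK)ᵀP̃(A − BK))Σ₀), ∇J̃(K) := 2((R + BᵀP̃B)K − BᵀP̃A)Σ₀, and K̃* := (R + BᵀP̃B)^{-1}BᵀP̃A. Then K̃* is the global minimizer of J̃, and for all K ∈ ℝ^{m×n}, ‖∇J̃(K)‖_F² ≥ μ·(J̃(K) − J̃(K̃*)), where μ := 4·σ_min(Σ₀)·σ_min(R). -/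
open Matrix BigOperators MeasureTheory

/-- The surrogate cost `J̃(K) = tr((Q + KᵀRK + (A−BK)ᵀP̃(A−BK))Σ₀)`. -/
noncomputable def Jtil {n m : ℕ} (A Q Ptil Sigma0 : Matrix (Fin n) (Fin n) ℝ)
    (B : Matrix (Fin n) (Fin m) ℝ) (R : Matrix (Fin m) (Fin m) ℝ)
    (K : Matrix (Fin m) (Fin n) ℝ) : ℝ :=
  ((Q + Kᵀ * R * K + (A - B * K)ᵀ * Ptil * (A - B * K)) * Sigma0).trace

/-!
Write `S = R + BᵀP̃B`, so that `S K̃* = BᵀP̃A`. Completing the square around `K̃*` gives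
`J̃(K) - J̃(K̃*) = tr(Δᵀ S Δ Σ₀) ≥ 0` with `Δ = K - K̃*`, while `∇J̃(K) = 2 S Δ Σ₀`, so
`‖∇J̃(K)‖_F² = 4 tr(Δᵀ S² Δ Σ₀²)`. From `S ≥ λ_min(R)` and `Σ₀ ≥ λ_min(Σ₀)` in the Loewner order
one gets `S² ≥ λ_min(R) S` and `Σ₀² ≥ λ_min(Σ₀) Σ₀`, hence
`‖∇J̃(K)‖_F² ≥ 4 λ_min(Σ₀) λ_min(R) (J̃(K) - J̃(K̃*))`; finally `σ_min = λ_min` for positive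
semidefinite matrices, because the Rayleigh infimum is attained at an eigenvector.
-/

section Rayleigh

variable {k : ℕ} {M : Matrix (Fin k) (Fin k) ℝ}

lemma bddBelow_rayleigh (hM : M.PosSemidef) :
    BddBelow (Set.range fun v : {v : Fin k → ℝ // v ⬝ᵥ v = 1} => v.1 ⬝ᵥ M *ᵥ v.1) :=
  ⟨0, by rintro _ ⟨v, rfl⟩; simpa using hM.dotProduct_mulVec_nonneg v.1⟩

lemma lamMin_le (hM : M.PosSemidef) {v : Fin k → ℝ} (hv : v ⬝ᵥ v = 1) :
    lamMin M ≤ v ⬝ᵥ M *ᵥ v :=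
  ciInf_le (bddBelow_rayleigh hM) ⟨v, hv⟩

lemma lamMin_nonneg (hM : M.PosSemidef) : 0 ≤ lamMin M :=
  Real.iInf_nonneg fun v => by simpa using hM.dotProduct_mulVec_nonneg v.1

lemma lamMin_mul_dotProduct_self_le (hM : M.PosSemidef) (v : Fin k → ℝ) :
    lamMin M * (v ⬝ᵥ v) ≤ v ⬝ᵥ M *ᵥ v := by
  rcases eq_or_ne v 0 with rfl | hv
  · simp
  have hvv : 0 < v ⬝ᵥ v := by
    simpa using (dotProduct_star_self_nonneg v).lt_of_ne' (by simpa using hv)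
  set r := √(v ⬝ᵥ v)
  have hr : 0 < r := Real.sqrt_pos.2 hvv
  have hrr : r * r = v ⬝ᵥ v := Real.mul_self_sqrt hvv.le
  have hunit : (r⁻¹ • v) ⬝ᵥ (r⁻¹ • v) = 1 := by
    rw [smul_dotProduct, dotProduct_smul, ← hrr]; simp only [smul_eq_mul]; field_simp
  have h := lamMin_le hM hunit
  rw [mulVec_smul, smul_dotProduct, dotProduct_smul, smul_eq_mul, smul_eq_mul,
    ← mul_assoc, ← mul_inv, hrr, le_inv_mul_iff₀ hvv, mul_comm] at h
  exact h

lemma posSemidef_sub_lamMin_smul_one (hM : M.PosSemidef) : (M - lamMin M • 1).PosSemidef := by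
  refine .of_dotProduct_mulVec_nonneg (hM.1.sub (isHermitian_one.smul (.all _))) fun v => ?_
  simp only [sub_mulVec, smul_mulVec, one_mulVec, dotProduct_sub, dotProduct_smul, star_trivial,
    smul_eq_mul, sub_nonneg]
  exact lamMin_mul_dotProduct_self_le hM v

lemma isCompact_setOf_dotProduct_self_eq_one : IsCompact {v : Fin k → ℝ | v ⬝ᵥ v = 1} := by
  refine Metric.isCompact_of_isClosed_isBounded (isClosed_eq (by fun_prop) continuous_const) ?_
  refine (Metric.isBounded_iff_subset_closedBall 0).2 ⟨1, fun v (hv : v ⬝ᵥ v = 1) => ?_⟩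
  rw [mem_closedBall_zero_iff, pi_norm_le_iff_of_nonneg zero_le_one]
  intro i
  have : v i * v i ≤ v ⬝ᵥ v := Finset.single_le_sum (f := fun j => v j * v j)
    (fun j _ => mul_self_nonneg _) (Finset.mem_univ i)
  rw [Real.norm_eq_abs, abs_le_one_iff_mul_self_le_one]
  linarith

/-- A unit minimizer of the Rayleigh quotient exists by compactness, and it lies in the kernel of
the positive semidefinite matrix `M - lamMin M • 1`. -/
lemma exists_mulVec_eq_lamMin_smul (hM : M.PosSemidef) {u₀ : Fin k → ℝ} (hu₀ : u₀ ⬝ᵥ u₀ = 1) :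
    ∃ u : Fin k → ℝ, u ⬝ᵥ u = 1 ∧ M *ᵥ u = lamMin M • u := by
  obtain ⟨u, hu : u ⬝ᵥ u = 1, hmin⟩ := isCompact_setOf_dotProduct_self_eq_one.exists_isMinOn
    ⟨u₀, hu₀⟩ (by fun_prop : Continuous fun v : Fin k → ℝ => v ⬝ᵥ M *ᵥ v).continuousOn
  have : Nonempty {v : Fin k → ℝ // v ⬝ᵥ v = 1} := ⟨⟨u, hu⟩⟩
  have hval : u ⬝ᵥ M *ᵥ u = lamMin M := le_antisymm (le_ciInf fun v => hmin v.2) (lamMin_le hM hu)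
  refine ⟨u, hu, ?_⟩
  have hker := ((posSemidef_sub_lamMin_smul_one hM).dotProduct_mulVec_zero_iff u).1 (by
    simp only [sub_mulVec, smul_mulVec, one_mulVec, dotProduct_sub, dotProduct_smul, star_trivial,
      smul_eq_mul, hval, hu, mul_one, sub_self])
  rwa [sub_mulVec, smul_mulVec, one_mulVec, sub_eq_zero] at hker

lemma sigMin_le_lamMin (hM : M.PosSemidef) : sigMin M ≤ lamMin M := by
  rcases isEmpty_or_nonempty {v : Fin k → ℝ // v ⬝ᵥ v = 1} with _ | ⟨u₀, hu₀⟩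
  · simp [sigMin, lamMin]
  obtain ⟨u, hu, hMu⟩ := exists_mulVec_eq_lamMin_smul hM hu₀
  rw [sigMin, Real.sqrt_le_left (lamMin_nonneg hM)]
  calc lamMin (Mᵀ * M) ≤ u ⬝ᵥ (Mᵀ * M) *ᵥ u := by
        refine lamMin_le ?_ hu
        simpa using posSemidef_conjTranspose_mul_self M
    _ = (M *ᵥ u) ⬝ᵥ (M *ᵥ u) := by
        rw [← mulVec_mulVec, dotProduct_mulVec, vecMul_transpose]
    _ = lamMin M ^ 2 := by
        rw [hMu, smul_dotProduct, dotProduct_smul, hu, smul_eq_mul, smul_eq_mul]; ring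

end Rayleigh

section Trace

variable {ι κ : Type*} [Fintype ι] [Fintype κ]

lemma posSemidef_mul_self_sub_smul [DecidableEq ι] {M : Matrix ι ι ℝ} {c : ℝ} (hc : 0 ≤ c)
    (hM : (M - c • 1).PosSemidef) : (M * M - c • M).PosSemidef := by
  have hsymm : (M - c • 1)ᴴ = M - c • 1 := hM.1
  have h : M * M - c • M = (M - c • 1)ᴴ * (M - c • 1) + c • (M - c • 1) := by
    rw [hsymm]; noncomm_ring
  rw [h]
  exact (posSemidef_conjTranspose_mul_self _).add (hM.smul hc)

lemma Matrix.PosSemidef.trace_mul_nonneg {X Y : Matrix ι ι ℝ} (hX : X.PosSemidef)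
    (hY : Y.PosSemidef) : 0 ≤ (X * Y).trace := by
  classical
  open scoped MatrixOrder in
  obtain ⟨C, rfl⟩ := CStarAlgebra.nonneg_iff_eq_star_mul_self.mp hX.nonneg
  rw [star_eq_conjTranspose, mul_assoc, trace_mul_comm]
  exact (hY.mul_mul_conjTranspose_same C).trace_nonneg

lemma trace_mul_le_trace_mul_left {X Y Z : Matrix ι ι ℝ} (hXY : (Y - X).PosSemidef)
    (hZ : Z.PosSemidef) : (X * Z).trace ≤ (Y * Z).trace := by
  have := hXY.trace_mul_nonneg hZ
  rwa [sub_mul, trace_sub, sub_nonneg] at this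

lemma trace_mul_le_trace_mul_right {X Y Z : Matrix ι ι ℝ} (hXY : (Y - X).PosSemidef)
    (hZ : Z.PosSemidef) : (Z * X).trace ≤ (Z * Y).trace := by
  rw [trace_mul_comm Z, trace_mul_comm Z]
  exact trace_mul_le_trace_mul_left hXY hZ

lemma Matrix.PosSemidef.transpose_mul_mul {S : Matrix ι ι ℝ} (hS : S.PosSemidef)
    (D : Matrix ι κ ℝ) : (Dᵀ * S * D).PosSemidef := by
  simpa using hS.conjTranspose_mul_mul_same D

end Trace

lemma fNorm_sq {k l : ℕ} (X : Matrix (Fin k) (Fin l) ℝ) : fNorm X ^ 2 = (Xᵀ * X).trace := by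
  rw [fNorm, Real.sq_sqrt (by positivity), trace, Finset.sum_comm]
  simp [mul_apply, pow_two]

lemma fNorm_smul {k l : ℕ} (c : ℝ) (X : Matrix (Fin k) (Fin l) ℝ) :
    fNorm (c • X) = |c| * fNorm X := by
  simp only [fNorm, Matrix.smul_apply, smul_eq_mul, mul_pow, ← Finset.mul_sum]
  rw [Real.sqrt_mul (sq_nonneg c), Real.sqrt_sq_eq_abs]

lemma mul_mul_trace_le_fNorm_sq {k l : ℕ} {S : Matrix (Fin k) (Fin k) ℝ}
    {Sig : Matrix (Fin l) (Fin l) ℝ} {a b : ℝ} (ha : 0 ≤ a) (hb : 0 ≤ b)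
    (hS : (S - a • 1).PosSemidef) (hSig : (Sig - b • 1).PosSemidef)
    (D : Matrix (Fin k) (Fin l) ℝ) :
    a * b * (Dᵀ * S * D * Sig).trace ≤ fNorm (S * D * Sig) ^ 2 := by
  have hSpsd : S.PosSemidef := by simpa using hS.add (PosSemidef.one.smul ha)
  have hSigpsd : Sig.PosSemidef := by simpa using hSig.add (PosSemidef.one.smul hb)
  have hSt : Sᵀ = S := by simpa using hSpsd.1.eq
  have hSigt : Sigᵀ = Sig := by simpa using hSigpsd.1.eq
  have hSig2 : (Sig * Sig).PosSemidef := by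
    simpa [hSigt] using posSemidef_conjTranspose_mul_self Sig
  have hright : (Sig * Sig - b • Sig).PosSemidef := posSemidef_mul_self_sub_smul hb hSig
  have hleft : (Dᵀ * (S * S) * D - a • (Dᵀ * S * D)).PosSemidef := by
    simpa [Matrix.mul_sub, Matrix.sub_mul, Matrix.mul_smul, Matrix.smul_mul] using
      (posSemidef_mul_self_sub_smul ha hS).transpose_mul_mul D
  calc a * b * (Dᵀ * S * D * Sig).trace = a * (Dᵀ * S * D * (b • Sig)).trace := by
        rw [Matrix.mul_smul, trace_smul, smul_eq_mul, mul_assoc]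
    _ ≤ a * (Dᵀ * S * D * (Sig * Sig)).trace := by
        gcongr
        exact trace_mul_le_trace_mul_right hright (hSpsd.transpose_mul_mul D)
    _ = (a • (Dᵀ * S * D) * (Sig * Sig)).trace := by
        rw [Matrix.smul_mul, trace_smul, smul_eq_mul]
    _ ≤ (Dᵀ * (S * S) * D * (Sig * Sig)).trace := trace_mul_le_trace_mul_left hleft hSig2
    _ = fNorm (S * D * Sig) ^ 2 := by
        rw [fNorm_sq]
        simp only [transpose_mul, hSt, hSigt, Matrix.mul_assoc]
        rw [trace_mul_comm Sig]
        simp only [Matrix.mul_assoc]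

lemma cost_eq_complete_square {k l : ℕ} {A P Q : Matrix (Fin k) (Fin k) ℝ}
    {B : Matrix (Fin k) (Fin l) ℝ} {R : Matrix (Fin l) (Fin l) ℝ} (hR : Rᵀ = R) (hP : Pᵀ = P)
    {K₀ : Matrix (Fin l) (Fin k) ℝ} (hK₀ : (R + Bᵀ * P * B) * K₀ = Bᵀ * P * A)
    (K : Matrix (Fin l) (Fin k) ℝ) :
    Q + Kᵀ * R * K + (A - B * K)ᵀ * P * (A - B * K) =
      (K - K₀)ᵀ * (R + Bᵀ * P * B) * (K - K₀) +
        (Q + K₀ᵀ * R * K₀ + (A - B * K₀)ᵀ * P * (A - B * K₀)) := by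
  have hnormal : R * K₀ = Bᵀ * P * (A - B * K₀) := by
    rw [Matrix.mul_sub, ← hK₀, Matrix.add_mul, Matrix.mul_assoc _ B]; abel
  obtain ⟨D, rfl⟩ : ∃ D, K = K₀ + D := ⟨K - K₀, by abel⟩
  have hcross : Dᵀ * (R * K₀) = Dᵀ * (Bᵀ * P * (A - B * K₀)) := by rw [hnormal]
  have hcross' : (R * K₀)ᵀ * D = (Bᵀ * P * (A - B * K₀))ᵀ * D := by rw [hnormal]
  simp only [transpose_mul, hR, hP, transpose_transpose] at hcross'
  simp only [add_sub_cancel_left, transpose_add, transpose_sub, transpose_mul, Matrix.add_mul,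
    Matrix.mul_add, Matrix.sub_mul, Matrix.mul_sub, Matrix.mul_assoc] at hcross hcross' ⊢
  rw [hcross, hcross']
  abel

lemma Jtil_sub_Jtil_eq {n m : ℕ} {A Q Ptil Sigma0 : Matrix (Fin n) (Fin n) ℝ}
    {B : Matrix (Fin n) (Fin m) ℝ} {R : Matrix (Fin m) (Fin m) ℝ} (hR : Rᵀ = R)
    (hP : Ptilᵀ = Ptil) {K₀ : Matrix (Fin m) (Fin n) ℝ}
    (hK₀ : (R + Bᵀ * Ptil * B) * K₀ = Bᵀ * Ptil * A) (K : Matrix (Fin m) (Fin n) ℝ) :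
    Jtil A Q Ptil Sigma0 B R K - Jtil A Q Ptil Sigma0 B R K₀ =
      ((K - K₀)ᵀ * (R + Bᵀ * Ptil * B) * (K - K₀) * Sigma0).trace := by
  rw [Jtil, Jtil, cost_eq_complete_square hR hP hK₀ K, Matrix.add_mul, trace_add,
    add_sub_cancel_right]

theorem surrogate_cost_PL_general {n m : ℕ}
    (A Q Ptil Sigma0 : Matrix (Fin n) (Fin n) ℝ) (B : Matrix (Fin n) (Fin m) ℝ)
    (R : Matrix (Fin m) (Fin m) ℝ)
    (hR : R.PosDef) (hSigma0 : Sigma0.PosDef)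
    (hPtil : Ptil.PosSemidef)
    (Kts : Matrix (Fin m) (Fin n) ℝ)
    (hKts : Kts = (R + Bᵀ * Ptil * B)⁻¹ * (Bᵀ * Ptil * A)) :
    (∀ K : Matrix (Fin m) (Fin n) ℝ,
        Jtil A Q Ptil Sigma0 B R Kts ≤ Jtil A Q Ptil Sigma0 B R K) ∧
      (∀ K : Matrix (Fin m) (Fin n) ℝ,
        fNorm ((2 : ℝ) • (((R + Bᵀ * Ptil * B) * K - Bᵀ * Ptil * A) * Sigma0)) ^ 2
          ≥ (4 * sigMin Sigma0 * sigMin R)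
            * (Jtil A Q Ptil Sigma0 B R K - Jtil A Q Ptil Sigma0 B R Kts)) := by
  set S := R + Bᵀ * Ptil * B
  have hBPB : (Bᵀ * Ptil * B).PosSemidef := hPtil.transpose_mul_mul B
  have hSsub : (S - lamMin R • 1).PosSemidef := by
    simpa [S, add_sub_right_comm] using (posSemidef_sub_lamMin_smul_one hR.posSemidef).add hBPB
  have hnormal : S * Kts = Bᵀ * Ptil * A := by
    rw [hKts, mul_nonsing_inv_cancel_left S _
      ((isUnit_iff_isUnit_det S).1 (hR.add_posSemidef hBPB).isUnit)]
  have hgap K : Jtil A Q Ptil Sigma0 B R K - Jtil A Q Ptil Sigma0 B R Kts =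
      ((K - Kts)ᵀ * S * (K - Kts) * Sigma0).trace :=
    Jtil_sub_Jtil_eq (by simpa using hR.1.eq) (by simpa using hPtil.1.eq) hnormal K
  have hgap_nonneg K : 0 ≤ ((K - Kts)ᵀ * S * (K - Kts) * Sigma0).trace :=
    ((hR.posSemidef.add hBPB).transpose_mul_mul _).trace_mul_nonneg hSigma0.posSemidef
  refine ⟨fun K => by linarith [hgap K, hgap_nonneg K], fun K => ?_⟩
  have hgrad : (S * K - Bᵀ * Ptil * A) * Sigma0 = S * (K - Kts) * Sigma0 := by
    rw [← hnormal, ← Matrix.mul_sub]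
  have hcore := mul_mul_trace_le_fNorm_sq (lamMin_nonneg hR.posSemidef)
    (lamMin_nonneg hSigma0.posSemidef) hSsub (posSemidef_sub_lamMin_smul_one hSigma0.posSemidef)
    (K - Kts)
  have hsig : sigMin Sigma0 * sigMin R ≤ lamMin R * lamMin Sigma0 := by
    rw [mul_comm (lamMin R)]
    exact mul_le_mul (sigMin_le_lamMin hSigma0.posSemidef) (sigMin_le_lamMin hR.posSemidef)
      (Real.sqrt_nonneg _) (lamMin_nonneg hSigma0.posSemidef)
  rw [hgrad, fNorm_smul, mul_pow, hgap K, ge_iff_le, show |(2 : ℝ)| ^ 2 = 4 by norm_num]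
  linarith [mul_le_mul_of_nonneg_right hsig (hgap_nonneg K)]

/-- Global minimizer and PL inequality for the surrogate cost. -/
theorem surrogate_cost_PL {n m : ℕ}
    (A Q Ptil Sigma0 : Matrix (Fin n) (Fin n) ℝ) (B : Matrix (Fin n) (Fin m) ℝ)
    (R : Matrix (Fin m) (Fin m) ℝ)
    (hQ : Q.PosDef) (hR : R.PosDef) (hSigma0 : Sigma0.PosDef)
    (hPtil : Ptil.PosSemidef)
    (Kts : Matrix (Fin m) (Fin n) ℝ)
    (hKts : Kts = (R + Bᵀ * Ptil * B)⁻¹ * (Bᵀ * Ptil * A)) :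
    (∀ K : Matrix (Fin m) (Fin n) ℝ,
        Jtil A Q Ptil Sigma0 B R Kts ≤ Jtil A Q Ptil Sigma0 B R K) ∧
      (∀ K : Matrix (Fin m) (Fin n) ℝ,
        fNorm ((2 : ℝ) • (((R + Bᵀ * Ptil * B) * K - Bᵀ * Ptil * A) * Sigma0)) ^ 2
          ≥ (4 * sigMin Sigma0 * sigMin R)
            * (Jtil A Q Ptil Sigma0 B R K - Jtil A Q Ptil Sigma0 B R Kts)) :=
  surrogate_cost_PL_general A Q Ptil Sigma0 B R hR hSigma0 hPtil Kts hKts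
end

section
/- Let E be a real inner product space, f : E → ℝ differentiable with gradient ∇f, and suppose: (i) (L-smoothness) f(y) ≤ f(x) + ⟨∇f(x), y − x⟩ + (L/2)‖y − x‖² for all x, y ∈ E; (ii) (PL inequality) there is f* ∈ ℝ with ‖∇f(x)‖² ≥ μ(f(x) − f*) for all x ∈ E, where μ, L > 0. Let (Ω, ℱ, ℙ) be a probability space, K ∈ E fixed, and g : Ω → E an integrable random vector with 𝔼[g] = ∇f(K) and 𝔼[‖g‖²] ≤ ξ. Then for any step-size α > 0, 𝔼[f(K − αg)] − f* ≤ (1 − μα)(f(K) − f*) + (L/2)α²ξ. -/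
/-!
Take expectations in the quadratic upper bound at `K` along the step `-α • g`: unbiasedness turns
the linear term into `-α ‖∇f K‖²`, which the PL inequality bounds by `-μ α (f K - f*)`, while the
quadratic term is controlled by the second moment `ξ`.
-/

open MeasureTheory
open scoped RealInnerProductSpace

section SmoothStep

variable {E : Type*} [NormedAddCommGroup E] [InnerProductSpace ℝ E]

theorem le_of_upper_quadratic_sub_smul {f : E → ℝ} {x d : E} {L : ℝ}
    (hquad : ∀ y, f y ≤ f x + ⟪d, y - x⟫ + L / 2 * ‖y - x‖ ^ 2) (α : ℝ) (v : E) :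
    f (x - α • v) ≤ f x - α * ⟪d, v⟫ + L / 2 * α ^ 2 * ‖v‖ ^ 2 := by
  have hstep : x - α • v - x = -(α • v) := by abel
  have h := hquad (x - α • v)
  rw [hstep, inner_neg_right, real_inner_smul_right, norm_neg, norm_smul, mul_pow,
    Real.norm_eq_abs, sq_abs] at h
  linarith

variable [CompleteSpace E] {Ω : Type*} [MeasurableSpace Ω] {P : Measure Ω}
  [IsProbabilityMeasure P] {g : Ω → E}

theorem integral_sub_mul_inner_add_mul_norm_sq (hg : Integrable g P)
    (hg_sq : Integrable (fun ω => ‖g ω‖ ^ 2) P) (c α β : ℝ) (d : E) :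
    ∫ ω, (c - α * ⟪d, g ω⟫ + β * ‖g ω‖ ^ 2) ∂P
      = c - α * ⟪d, ∫ ω, g ω ∂P⟫ + β * ∫ ω, ‖g ω‖ ^ 2 ∂P := by
  have hinner : Integrable (fun ω => α * ⟪d, g ω⟫) P := (hg.const_inner d).const_mul α
  have hlin : Integrable (fun ω => c - α * ⟪d, g ω⟫) P := (integrable_const c).sub hinner
  rw [integral_add hlin (hg_sq.const_mul β),
    integral_sub (integrable_const c) hinner, integral_const, integral_const_mul,
    integral_const_mul, integral_inner hg]
  simp

theorem integral_le_of_upper_quadratic_sub_smul {f : E → ℝ} {x d : E} {L : ℝ}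
    (hquad : ∀ y, f y ≤ f x + ⟪d, y - x⟫ + L / 2 * ‖y - x‖ ^ 2)
    (hg : Integrable g P) (hg_mean : ∫ ω, g ω ∂P = d)
    (hg_sq : Integrable (fun ω => ‖g ω‖ ^ 2) P) (α : ℝ)
    (hf : Integrable (fun ω => f (x - α • g ω)) P) :
    ∫ ω, f (x - α • g ω) ∂P ≤ f x - α * ‖d‖ ^ 2 + L / 2 * α ^ 2 * ∫ ω, ‖g ω‖ ^ 2 ∂P := by
  have hbound : Integrable (fun ω => f x - α * ⟪d, g ω⟫ + L / 2 * α ^ 2 * ‖g ω‖ ^ 2) P :=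
    ((integrable_const _).sub ((hg.const_inner d).const_mul α)).add (hg_sq.const_mul _)
  calc ∫ ω, f (x - α • g ω) ∂P
      ≤ ∫ ω, (f x - α * ⟪d, g ω⟫ + L / 2 * α ^ 2 * ‖g ω‖ ^ 2) ∂P :=
        integral_mono hf hbound fun ω => le_of_upper_quadratic_sub_smul hquad α (g ω)
    _ = f x - α * ‖d‖ ^ 2 + L / 2 * α ^ 2 * ∫ ω, ‖g ω‖ ^ 2 ∂P := by
        rw [integral_sub_mul_inner_add_mul_norm_sq hg hg_sq, hg_mean,
          real_inner_self_eq_norm_sq]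

end SmoothStep

theorem sgd_one_step_descent_general {E : Type*} [NormedAddCommGroup E]
    [InnerProductSpace ℝ E] [CompleteSpace E]
    (f : E → ℝ) (gradf : E → E)
    (L μ fstar : ℝ) (hL : 0 < L)
    (hsmooth : ∀ x y : E, f y ≤ f x + ⟪gradf x, y - x⟫ + L / 2 * ‖y - x‖ ^ 2)
    (hPL : ∀ x : E, ‖gradf x‖ ^ 2 ≥ μ * (f x - fstar))
    {Ω : Type*} [MeasurableSpace Ω] (ℙ : Measure Ω) [IsProbabilityMeasure ℙ]
    (K : E) (g : Ω → E)
    (hg_int : Integrable g ℙ)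
    (hg_mean : ∫ ω, g ω ∂ℙ = gradf K)
    (hg_sq_int : Integrable (fun ω => ‖g ω‖ ^ 2) ℙ)
    (ξ : ℝ) (hg_sq : ∫ ω, ‖g ω‖ ^ 2 ∂ℙ ≤ ξ)
    (α : ℝ) (hα : 0 < α)
    (hf_int : Integrable (fun ω => f (K - α • g ω)) ℙ) :
    (∫ ω, f (K - α • g ω) ∂ℙ) - fstar
      ≤ (1 - μ * α) * (f K - fstar) + L / 2 * α ^ 2 * ξ := by
  have hdescent := integral_le_of_upper_quadratic_sub_smul (hsmooth K) hg_int hg_mean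
    hg_sq_int α hf_int
  have hnoise : L / 2 * α ^ 2 * ∫ ω, ‖g ω‖ ^ 2 ∂ℙ ≤ L / 2 * α ^ 2 * ξ := by gcongr
  have hPL_step : α * (μ * (f K - fstar)) ≤ α * ‖gradf K‖ ^ 2 := by gcongr; exact hPL K
  linarith

/-- One-step descent recursion for stochastic gradient descent under
`L`-smoothness and the PL inequality, with an unbiased gradient estimate of bounded
second moment. -/
theorem sgd_one_step_descent {E : Type*} [NormedAddCommGroup E]
    [InnerProductSpace ℝ E] [CompleteSpace E]
    (f : E → ℝ) (gradf : E → E) (hdiff : ∀ x, HasGradientAt f (gradf x) x)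
    (L μ fstar : ℝ) (hL : 0 < L) (hμ : 0 < μ)
    (hsmooth : ∀ x y : E, f y ≤ f x + ⟪gradf x, y - x⟫ + L / 2 * ‖y - x‖ ^ 2)
    (hPL : ∀ x : E, ‖gradf x‖ ^ 2 ≥ μ * (f x - fstar))
    {Ω : Type*} [MeasurableSpace Ω] (ℙ : Measure Ω) [IsProbabilityMeasure ℙ]
    (K : E) (g : Ω → E)
    (hg_int : Integrable g ℙ)
    (hg_mean : ∫ ω, g ω ∂ℙ = gradf K)
    (hg_sq_int : Integrable (fun ω => ‖g ω‖ ^ 2) ℙ)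
    (ξ : ℝ) (hg_sq : ∫ ω, ‖g ω‖ ^ 2 ∂ℙ ≤ ξ)
    (α : ℝ) (hα : 0 < α)
    (hf_int : Integrable (fun ω => f (K - α • g ω)) ℙ) :
    (∫ ω, f (K - α • g ω) ∂ℙ) - fstar
      ≤ (1 - μ * α) * (f K - fstar) + L / 2 * α ^ 2 * ξ :=
  sgd_one_step_descent_general f gradf L μ fstar hL hsmooth hPL ℙ K g hg_int hg_mean hg_sq_int ξ
    hg_sq α hα hf_int
end

section
/- Let θ ≥ 2 and J₀ > 0 be real numbers, c ≥ 0 with θ·J₀ ≥ c, and let (a_t)_{t∈ℕ} be a sequence of nonnegative reals with a₀ ≤ J₀ and, for all t ∈ ℕ, a_{t+1} ≤ (1 − 2/(t + θ))·a_t + c/(t + θ)². Then for all t ∈ ℕ, a_t ≤ θ·J₀/(t + θ). -/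
/-! The candidate bound `b_t = M / (t + θ)` with `M = θ J₀` is a supersolution of the recursion:
writing `s = t + θ`, one step maps it to `((s - 2) M + c) / s²`, which is at most `M / (s + 1)`
exactly when `c (s + 1) ≤ M (s + 2)`, true as soon as `c ≤ M` and `M ≥ 0`. Since `θ ≥ 2` the
coefficient `1 - 2 / s` is nonnegative, so the bound propagates by induction from `a₀ ≤ J₀`. -/

lemma recursion_step_le {s M c : ℝ} (hs : 0 < s) (hM : 0 ≤ M) (hcM : c ≤ M) :
    (1 - 2 / s) * (M / s) + c / s ^ 2 ≤ M / (s + 1) := by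
  have hstep : (1 - 2 / s) * (M / s) + c / s ^ 2 = ((s - 2) * M + c) / s ^ 2 := by
    field_simp
  rw [hstep, div_le_div_iff₀ (by positivity) (by linarith)]
  nlinarith

theorem recursion_decay_general (θ J₀ c : ℝ) (hθ : 2 ≤ θ) (hJ₀ : 0 < J₀)
    (hcJ : c ≤ θ * J₀)
    (a : ℕ → ℝ) (ha0 : a 0 ≤ J₀)
    (hrec : ∀ t : ℕ, a (t + 1) ≤ (1 - 2 / ((t : ℝ) + θ)) * a t + c / ((t : ℝ) + θ) ^ 2) :
    ∀ t : ℕ, a t ≤ θ * J₀ / ((t : ℝ) + θ) := by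
  have hM : 0 ≤ θ * J₀ := by positivity
  intro t
  induction t with
  | zero => simpa [mul_div_cancel_left₀ J₀ (by linarith : θ ≠ 0)] using ha0
  | succ t ih =>
    have hs : 2 ≤ (t : ℝ) + θ := by linarith [t.cast_nonneg (α := ℝ)]
    have hcoef : 0 ≤ 1 - 2 / ((t : ℝ) + θ) := by
      rw [sub_nonneg, div_le_one (by linarith)]
      exact hs
    calc a (t + 1)
        ≤ (1 - 2 / ((t : ℝ) + θ)) * a t + c / ((t : ℝ) + θ) ^ 2 := hrec t
      _ ≤ (1 - 2 / ((t : ℝ) + θ)) * (θ * J₀ / ((t : ℝ) + θ)) + c / ((t : ℝ) + θ) ^ 2 := by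
        gcongr
      _ ≤ θ * J₀ / ((t : ℝ) + θ + 1) := recursion_step_le (by linarith) hM hcJ
      _ = θ * J₀ / (((t + 1 : ℕ) : ℝ) + θ) := by push_cast; ring_nf

/-- Deterministic recursion bound behind the inner-loop induction:
if `a₀ ≤ J₀` and `a_{t+1} ≤ (1 − 2/(t+θ))·a_t + c/(t+θ)²` with `θ ≥ 2`, `c ≤ θ·J₀`,
then `a_t ≤ θ·J₀/(t+θ)` for all `t`. -/
theorem recursion_decay (θ J₀ c : ℝ) (hθ : 2 ≤ θ) (hJ₀ : 0 < J₀)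
    (hc : 0 ≤ c) (hcJ : c ≤ θ * J₀)
    (a : ℕ → ℝ) (hnonneg : ∀ t, 0 ≤ a t) (ha0 : a 0 ≤ J₀)
    (hrec : ∀ t : ℕ, a (t + 1) ≤ (1 - 2 / ((t : ℝ) + θ)) * a t + c / ((t : ℝ) + θ) ^ 2) :
    ∀ t : ℕ, a t ≤ θ * J₀ / ((t : ℝ) + θ) :=
  recursion_decay_general θ J₀ c hθ hJ₀ hcJ a ha0 hrec
end

section
/- Let (Ω, ℱ, ℙ) be a probability space with a filtration (ℱ_t)_{t∈ℕ}, and let (Δ_t)_{t∈ℕ} be a nonnegative, integrable process adapted to (ℱ_t). Fix reals J₀ > 0, 0 < ζ < 1, θ ≥ 2, and c ≥ 0 with θ·J₀ ≥ c. Define the stopping time τ := min{t : Δ_t > 10ζ^{-1}J₀}. Assume Δ₀ ≤ J₀ almost surely, and that for every t ∈ ℕ, 𝔼[Δ_{t+1} | ℱ_t]·𝟙_{τ > t} ≤ ((1 − 2/(t + θ))·Δ_t + c/(t + θ)²)·𝟙_{τ > t} almost surely. Then for every T ∈ ℕ with T ≥ 1: (a) 𝔼[Δ_T·𝟙_{τ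 > T}] ≤ θ·J₀/(T + θ), and (b) ℙ(τ ≤ T) ≤ (3/10)·ζ. -/
/-!
Put `M = 10 ζ⁻¹ J₀`, `S t = {τ > t}` and `e t = 𝔼[Δ_t 𝟙_{S t}]`. Integrating the conditional
recursion over the `ℱ t`-measurable event `S t` and using `S (t+1) ⊆ S t` gives the deterministic
recursion `e (t+1) ≤ (1 - 2/(t+θ)) e t + c/(t+θ)²`, which yields (a) by induction. For (b), on
`S t \ S (t+1)` the process has just exceeded `M`, so Markov's inequality on these exit events
telescopes to `M ℙ(τ ≤ T) + e T ≤ 𝔼 Δ₀ + ∑ c/(t+θ)² ≤ J₀ + 2 J₀`.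
-/

open MeasureTheory Finset

lemma le_mul_div_of_recursion {e : ℕ → ℝ} {J₀ θ c : ℝ} (hJ₀ : 0 ≤ J₀) (hθ : 2 ≤ θ)
    (hcJ : c ≤ θ * J₀) (h0 : e 0 ≤ J₀)
    (hrec : ∀ t : ℕ, e (t + 1) ≤ (1 - 2 / ((t : ℝ) + θ)) * e t + c / ((t : ℝ) + θ) ^ 2)
    (t : ℕ) : e t ≤ θ * J₀ / ((t : ℝ) + θ) := by
  induction t with
  | zero => simpa [(show θ ≠ 0 by linarith)] using h0
  | succ t ih =>
    set a : ℝ := (t : ℝ) + θ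
    have ha : 2 ≤ a := le_add_of_nonneg_of_le t.cast_nonneg hθ
    have hcontr : 0 ≤ 1 - 2 / a := by rw [sub_nonneg, div_le_one (by linarith)]; exact ha
    have hbound : (1 - 2 / a) * (θ * J₀ / a) + c / a ^ 2 ≤ θ * J₀ / (a + 1) := by
      have hθJ : 0 ≤ θ * J₀ := by positivity
      rw [show (1 - 2 / a) * (θ * J₀ / a) + c / a ^ 2 = ((a - 2) * (θ * J₀) + c) / a ^ 2 by
        field_simp, div_le_div_iff₀ (by positivity) (by positivity)]
      nlinarith [mul_le_mul_of_nonneg_right hcJ (by linarith : (0 : ℝ) ≤ a + 1)]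
    push_cast
    rw [add_right_comm]
    calc e (t + 1) ≤ (1 - 2 / a) * e t + c / a ^ 2 := hrec t
      _ ≤ (1 - 2 / a) * (θ * J₀ / a) + c / a ^ 2 := by gcongr
      _ ≤ θ * J₀ / (a + 1) := hbound

lemma sum_range_div_add_sq_le {θ c : ℝ} (hθ : 1 < θ) (hc : 0 ≤ c) (n : ℕ) :
    ∑ s ∈ range n, c / ((s : ℝ) + θ) ^ 2 ≤ c / (θ - 1) := by
  have hterm : ∀ s : ℕ, c / ((s : ℝ) + θ) ^ 2 ≤
      c / ((s : ℝ) + θ - 1) - c / (((s + 1 : ℕ) : ℝ) + θ - 1) := by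
    intro s
    have hs : 0 < (s : ℝ) + θ - 1 := by linarith [(s.cast_nonneg : (0 : ℝ) ≤ s)]
    push_cast
    rw [show (s : ℝ) + 1 + θ - 1 = s + θ by ring, div_sub_div _ _ hs.ne' (by linarith),
      div_le_div_iff₀ (by positivity) (by positivity)]
    nlinarith
  calc ∑ s ∈ range n, c / ((s : ℝ) + θ) ^ 2
      ≤ ∑ s ∈ range n, (c / ((s : ℝ) + θ - 1) - c / (((s + 1 : ℕ) : ℝ) + θ - 1)) :=
        sum_le_sum fun s _ => hterm s
    _ = c / (θ - 1) - c / ((n : ℝ) + θ - 1) := by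
        rw [sum_range_sub' (fun s : ℕ => c / ((s : ℝ) + θ - 1))]; simp
    _ ≤ c / (θ - 1) := by
        have : 0 < (n : ℝ) + θ - 1 := by linarith [(n.cast_nonneg : (0 : ℝ) ≤ n)]
        have := div_nonneg hc this.le
        linarith

section Exceedance

variable {Ω : Type*} {X : ℕ → Ω → ℝ} {M : ℝ}

/-- The event `{τ > t}` for `τ` the first time at which `X` exceeds `M`. -/
def belowUntil (X : ℕ → Ω → ℝ) (M : ℝ) (t : ℕ) : Set Ω := {ω | ∀ s ≤ t, X s ω ≤ M}

lemma belowUntil_antitone : Antitone (belowUntil X M) :=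
  fun _ _ htu _ hω s hs => hω s (hs.trans htu)

lemma measurableSet_belowUntil {m : MeasurableSpace Ω} {t : ℕ}
    (hX : ∀ s ≤ t, Measurable[m] (X s)) : MeasurableSet[m] (belowUntil X M t) := by
  have : belowUntil X M t = ⋂ s ∈ Set.Iic t, X s ⁻¹' Set.Iic M := by
    ext ω; simp [belowUntil]
  rw [this]
  exact .biInter (Set.to_countable _) fun s hs => hX s hs measurableSet_Iic

lemma lt_of_mem_compl_belowUntil_zero {ω : Ω} (hω : ω ∈ (belowUntil X M 0)ᶜ) : M < X 0 ω := by
  simpa [belowUntil] using hω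

lemma lt_of_mem_belowUntil_sdiff_succ {ω : Ω} {t : ℕ}
    (hω : ω ∈ belowUntil X M t \ belowUntil X M (t + 1)) : M < X (t + 1) ω := by
  obtain ⟨hbelow, hexit⟩ := hω
  obtain ⟨s, hs, hlt⟩ : ∃ s ≤ t + 1, M < X s ω := by simpa [belowUntil] using hexit
  obtain rfl : s = t + 1 := by
    by_contra hne
    exact (hbelow s (by omega)).not_gt hlt
  exact hlt

variable {m0 : MeasurableSpace Ω} {μ : Measure Ω}

lemma mul_measureReal_compl_belowUntil_add_setIntegral_le [IsFiniteMeasure μ]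
    (hmeas : ∀ t, Measurable (X t)) (hint : ∀ t, Integrable (X t) μ) {b : ℕ → ℝ}
    (hstep : ∀ t, ∫ ω in belowUntil X M t, X (t + 1) ω ∂μ ≤
      ∫ ω in belowUntil X M t, X t ω ∂μ + b t) (t : ℕ) :
    M * μ.real (belowUntil X M t)ᶜ + ∫ ω in belowUntil X M t, X t ω ∂μ ≤
      ∫ ω, X 0 ω ∂μ + ∑ s ∈ range t, b s := by
  have hS : ∀ t, MeasurableSet (belowUntil X M t) :=
    fun t => measurableSet_belowUntil fun s _ => hmeas s
  induction t with
  | zero =>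
    have hmarkov := setIntegral_ge_of_const_le_real (hS 0).compl (measure_ne_top μ _)
      (fun ω hω => (lt_of_mem_compl_belowUntil_zero hω).le) (hint 0).integrableOn
    have := integral_add_compl (hS 0) (hint 0)
    simp only [range_zero, sum_empty]
    linarith
  | succ t ih =>
    have hsub := belowUntil_antitone (X := X) (M := M) t.le_succ
    have hmarkov := setIntegral_ge_of_const_le_real ((hS t).diff (hS (t + 1)))
      (measure_ne_top μ _) (fun ω hω => (lt_of_mem_belowUntil_sdiff_succ hω).le)
      (hint (t + 1)).integrableOn
    rw [setIntegral_sdiff (hS (t + 1)) (hint (t + 1)).integrableOn hsub,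
      measureReal_sdiff hsub (hS (t + 1))] at hmarkov
    rw [measureReal_compl (hS t)] at ih
    rw [measureReal_compl (hS (t + 1)), sum_range_succ]
    linarith [hstep t]

end Exceedance

lemma setIntegral_le_mul_add_of_condExp_le {Ω : Type*} {m m0 : MeasurableSpace Ω}
    {μ : Measure Ω} [IsProbabilityMeasure μ] (hm : m ≤ m0) {s : Set Ω} (hs : MeasurableSet[m] s)
    {X Y : Ω → ℝ} (hX : Integrable X μ) (hY : Integrable Y μ) {a b : ℝ} (hb : 0 ≤ b)
    (hcond : ∀ᵐ ω ∂μ, ω ∈ s → μ[X|m] ω ≤ a * Y ω + b) :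
    ∫ ω in s, X ω ∂μ ≤ a * ∫ ω in s, Y ω ∂μ + b := by
  have haffine : Integrable (fun ω => a * Y ω + b) μ := (hY.const_mul a).add (integrable_const b)
  calc ∫ ω in s, X ω ∂μ = ∫ ω in s, μ[X|m] ω ∂μ := (setIntegral_condExp hm hX hs).symm
    _ ≤ ∫ ω in s, (a * Y ω + b) ∂μ :=
        setIntegral_mono_ae_restrict integrable_condExp.integrableOn haffine.integrableOn
          ((ae_restrict_iff' (hm s hs)).2 hcond)
    _ = a * ∫ ω in s, Y ω ∂μ + b * μ.real s := by
        rw [integral_add (hY.const_mul a).integrableOn (integrable_const b), integral_const_mul,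
          setIntegral_const, smul_eq_mul, mul_comm b]
    _ ≤ a * ∫ ω in s, Y ω ∂μ + b := by
        have := mul_le_mul_of_nonneg_left (measureReal_le_one (μ := μ) (s := s)) hb
        linarith

theorem stopped_supermartingale_bound_general {Ω : Type*} {m0 : MeasurableSpace Ω}
    (ℙ : Measure Ω) [IsProbabilityMeasure ℙ]
    (ℱ : Filtration ℕ m0)
    (Δ : ℕ → Ω → ℝ)
    (hadapted : Adapted ℱ Δ)
    (hnonneg : ∀ t ω, 0 ≤ Δ t ω)
    (hint : ∀ t, Integrable (Δ t) ℙ)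
    (J₀ ζ θ c : ℝ) (hJ₀ : 0 < J₀) (hζ0 : 0 < ζ)
    (hθ : 2 ≤ θ) (hc : 0 ≤ c) (hcJ : c ≤ θ * J₀)
    (A : ℕ → Set Ω)
    (hA : ∀ t, A t = {ω | ∀ s ≤ t, Δ s ω ≤ 10 * ζ⁻¹ * J₀})
    (hΔ0 : ∀ᵐ ω ∂ℙ, Δ 0 ω ≤ J₀)
    (hrec : ∀ t : ℕ, ∀ᵐ ω ∂ℙ, ω ∈ A t →
      (ℙ[Δ (t + 1)|ℱ t]) ω ≤ (1 - 2 / ((t : ℝ) + θ)) * Δ t ω + c / ((t : ℝ) + θ) ^ 2) :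
    ∀ T : ℕ, 1 ≤ T →
      (∫ ω in A T, Δ T ω ∂ℙ ≤ θ * J₀ / ((T : ℝ) + θ)) ∧
        ℙ ((A T)ᶜ) ≤ ENNReal.ofReal (3 / 10 * ζ) := by
  set M := 10 * ζ⁻¹ * J₀
  obtain rfl : A = belowUntil Δ M := funext hA
  have hE0 : ∫ ω, Δ 0 ω ∂ℙ ≤ J₀ := by
    simpa using integral_mono_ae (hint 0) (integrable_const J₀) hΔ0
  have hstep (t : ℕ) := setIntegral_le_mul_add_of_condExp_le (ℱ.le t)
    (measurableSet_belowUntil fun s hs => (hadapted s).mono (ℱ.mono hs) le_rfl)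
    (hint (t + 1)) (hint t) (by positivity) (hrec t)
  intro T _
  constructor
  · refine le_mul_div_of_recursion (e := fun t => ∫ ω in belowUntil Δ M t, Δ t ω ∂ℙ) hJ₀.le
      hθ hcJ ((setIntegral_le_integral (hint 0) (.of_forall (hnonneg 0))).trans hE0) (fun t => ?_) T
    exact (setIntegral_mono_set (hint _).integrableOn (.of_forall (hnonneg _))
      (belowUntil_antitone t.le_succ).eventuallyLE).trans (hstep t)
  · have hdrift (t : ℕ) : ∫ ω in belowUntil Δ M t, Δ (t + 1) ω ∂ℙ ≤
        ∫ ω in belowUntil Δ M t, Δ t ω ∂ℙ + c / ((t : ℝ) + θ) ^ 2 := by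
      have : 0 ≤ 2 / ((t : ℝ) + θ) * ∫ ω in belowUntil Δ M t, Δ t ω ∂ℙ :=
        mul_nonneg (by positivity) (integral_nonneg (hnonneg t))
      linarith [hstep t]
    have hmarkov := mul_measureReal_compl_belowUntil_add_setIntegral_le
      (fun t => (hadapted t).mono (ℱ.le t) le_rfl) hint hdrift T
    have hsum : ∑ s ∈ range T, c / ((s : ℝ) + θ) ^ 2 ≤ 2 * J₀ := by
      refine (sum_range_div_add_sq_le (by linarith) hc T).trans ?_
      rw [div_le_iff₀ (by linarith)]; nlinarith
    have hM : M * ℙ.real (belowUntil Δ M T)ᶜ ≤ M * (3 / 10 * ζ) := by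
      have : M * (3 / 10 * ζ) = 3 * J₀ := by simp only [M]; field_simp
      have he : 0 ≤ ∫ ω in belowUntil Δ M T, Δ T ω ∂ℙ := integral_nonneg (hnonneg T)
      linarith
    exact (ENNReal.le_ofReal_iff_toReal_le (measure_ne_top _ _) (by positivity)).2
      (le_of_mul_le_mul_left hM (by positivity))

/-- Proposition: probabilistic optimality-gap guarantee.
Here `A t = {ω | ∀ s ≤ t, Δ_s ω ≤ 10ζ⁻¹J₀}` is the event `{τ > t}` for the stopping
time `τ = min{t : Δ_t > 10ζ⁻¹J₀}`, so `(A T)ᶜ = {τ ≤ T}`, the set integral over `A T`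
is `𝔼[Δ_T·𝟙_{τ>T}]`, and the conditional-expectation hypothesis is the descent
recursion multiplied by `𝟙_{τ>t}`. -/
theorem stopped_supermartingale_bound {Ω : Type*} {m0 : MeasurableSpace Ω}
    (ℙ : Measure Ω) [IsProbabilityMeasure ℙ]
    (ℱ : Filtration ℕ m0)
    (Δ : ℕ → Ω → ℝ)
    (hadapted : Adapted ℱ Δ)
    (hnonneg : ∀ t ω, 0 ≤ Δ t ω)
    (hint : ∀ t, Integrable (Δ t) ℙ)
    (J₀ ζ θ c : ℝ) (hJ₀ : 0 < J₀) (hζ0 : 0 < ζ) (hζ1 : ζ < 1)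
    (hθ : 2 ≤ θ) (hc : 0 ≤ c) (hcJ : c ≤ θ * J₀)
    (A : ℕ → Set Ω)
    (hA : ∀ t, A t = {ω | ∀ s ≤ t, Δ s ω ≤ 10 * ζ⁻¹ * J₀})
    (hΔ0 : ∀ᵐ ω ∂ℙ, Δ 0 ω ≤ J₀)
    (hrec : ∀ t : ℕ, ∀ᵐ ω ∂ℙ, ω ∈ A t →
      (ℙ[Δ (t + 1)|ℱ t]) ω ≤ (1 - 2 / ((t : ℝ) + θ)) * Δ t ω + c / ((t : ℝ) + θ) ^ 2) :
    ∀ T : ℕ, 1 ≤ T →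
      (∫ ω in A T, Δ T ω ∂ℙ ≤ θ * J₀ / ((T : ℝ) + θ)) ∧
        ℙ ((A T)ᶜ) ≤ ENNReal.ofReal (3 / 10 * ζ) :=
  stopped_supermartingale_bound_general ℙ ℱ Δ hadapted hnonneg hint J₀ ζ θ c hJ₀ hζ0 hθ hc hcJ A hA
    hΔ0 hrec
end

section
/- Let V ∈ ℝ^{n×n} be symmetric positive definite with positive semidefinite square root V^{1/2}, and let Z ∈ ℝ^{n×n} be any matrix. Then ‖V^{1/2}·exp(Z)·V^{1/2} − V‖ ≤ ‖V‖·e^{‖Z‖_F}·‖Z‖_F, where exp is the matrix exponential, ‖·‖ is the spectral norm, and ‖·‖_F is the Frobenius norm. (In particular, for symmetric Z, writing U := V^{1/2}exp(Z)V^{1/2} and δ(U,V) := ‖Z‖_F, this reads ‖U − V‖ ≤ ‖V‖·e^{δ(U,V)}·δ(U,V).) -/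
open Matrix BigOperators MeasureTheory

/-!
Write `V = S * S`. Then `S * exp Z * S - V = S * (exp Z - 1) * S`, and since `S` is self-adjoint
the C⋆-identity gives `‖S‖² = ‖S * S‖ = ‖V‖`, so the left side is at most
`‖V‖ * ‖exp Z - 1‖ ≤ ‖V‖ * (e^{‖Z‖} - 1)` by comparing the exponential series termwise.
Finally `e^t - 1 ≤ t e^t` and the spectral norm is dominated by the Frobenius norm
(Cauchy–Schwarz row by row).
-/

open scoped Matrix.Norms.L2Operator

theorem NormedSpace.norm_exp_sub_one_le {𝔸 : Type*} [NormedRing 𝔸] [NormedAlgebra ℝ 𝔸]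
    [CompleteSpace 𝔸] (x : 𝔸) : ‖NormedSpace.exp x - 1‖ ≤ Real.exp ‖x‖ - 1 := by
  have hx := (hasSum_nat_add_iff' 1).mpr (NormedSpace.exp_series_hasSum_exp' (𝕂 := ℝ) x)
  have hr := (hasSum_nat_add_iff' 1).mpr (NormedSpace.expSeries_div_hasSum_exp ‖x‖)
  rw [← Real.exp_eq_exp_ℝ] at hr
  simp only [Finset.range_one, Finset.sum_singleton, pow_zero, Nat.factorial_zero, Nat.cast_one,
    inv_one, one_smul, div_one] at hx hr
  refine hx.norm_le_of_bounded hr fun n => ?_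
  rw [norm_smul, norm_inv, Real.norm_natCast, div_eq_inv_mul]
  exact mul_le_mul_of_nonneg_left (norm_pow_le' x n.succ_pos) (by positivity)

theorem Real.exp_sub_one_le_mul_exp (t : ℝ) : Real.exp t - 1 ≤ t * Real.exp t := by
  have h1 : 1 - t ≤ Real.exp (-t) := by linarith [Real.add_one_le_exp (-t)]
  have h2 : Real.exp (-t) * Real.exp t = 1 := by rw [← Real.exp_add]; simp
  nlinarith [Real.exp_pos t]

theorem IsSelfAdjoint.norm_mul_mul_self_le {A : Type*} [NonUnitalNormedRing A] [StarRing A]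
    [CStarRing A] {s : A} (hs : IsSelfAdjoint s) (a : A) : ‖s * a * s‖ ≤ ‖s * s‖ * ‖a‖ := by
  have hss : ‖s * s‖ = ‖s‖ * ‖s‖ := by
    simpa only [hs.star_eq] using CStarRing.norm_star_mul_self (x := s)
  calc ‖s * a * s‖ ≤ ‖s‖ * ‖a‖ * ‖s‖ := norm_mul₃_le
    _ = ‖s * s‖ * ‖a‖ := by rw [hss]; ring

theorem IsSelfAdjoint.norm_mul_exp_mul_sub_le {A : Type*} [NormedRing A] [NormedAlgebra ℝ A]
    [CompleteSpace A] [StarRing A] [CStarRing A] {s : A} (hs : IsSelfAdjoint s) (z : A) :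
    ‖s * NormedSpace.exp z * s - s * s‖ ≤ ‖s * s‖ * (Real.exp ‖z‖ - 1) := by
  have hconj : s * NormedSpace.exp z * s - s * s = s * (NormedSpace.exp z - 1) * s := by
    noncomm_ring
  rw [hconj]
  exact (hs.norm_mul_mul_self_le _).trans
    (mul_le_mul_of_nonneg_left (NormedSpace.norm_exp_sub_one_le z) (norm_nonneg _))

theorem Matrix.l2_opNorm_le_sqrt_sum_sq {m n : Type*} [Fintype m] [Fintype n] [DecidableEq n]
    (A : Matrix m n ℝ) : ‖A‖ ≤ √(∑ i, ∑ j, A i j ^ 2) := by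
  rw [l2_opNorm_def]
  refine ContinuousLinearMap.opNorm_le_bound _ (Real.sqrt_nonneg _) fun x => ?_
  simp only [EuclideanSpace.norm_eq, Real.norm_eq_abs, sq_abs]
  rw [← Real.sqrt_mul (by positivity)]
  refine Real.sqrt_le_sqrt ?_
  rw [Finset.sum_mul]
  exact Finset.sum_le_sum fun i _ => Finset.sum_mul_sq_le_sq_mul_sq _ _ _

theorem sNorm_eq_l2_opNorm {m n : ℕ} (M : Matrix (Fin m) (Fin n) ℝ) : sNorm M = ‖M‖ := rfl

theorem sNorm_le_fNorm {m n : ℕ} (M : Matrix (Fin m) (Fin n) ℝ) : sNorm M ≤ fNorm M :=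
  M.l2_opNorm_le_sqrt_sum_sq

theorem exp_conj_sub_norm_bound_general {n : ℕ} (V S Z : Matrix (Fin n) (Fin n) ℝ)
    (hS : S.PosSemidef) (hSV : S * S = V) :
    sNorm (S * NormedSpace.exp Z * S - V)
      ≤ sNorm V * Real.exp (fNorm Z) * fNorm Z := by
  subst hSV
  have hZ : ‖Z‖ ≤ fNorm Z := sNorm_le_fNorm Z
  have hexp : Real.exp ‖Z‖ - 1 ≤ fNorm Z * Real.exp (fNorm Z) :=
    (Real.exp_sub_one_le_mul_exp _).trans <|
      mul_le_mul hZ (Real.exp_le_exp.2 hZ) (Real.exp_pos _).le (hZ.trans' (norm_nonneg Z))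
  rw [sNorm_eq_l2_opNorm, sNorm_eq_l2_opNorm]
  calc ‖S * NormedSpace.exp Z * S - S * S‖ ≤ ‖S * S‖ * (Real.exp ‖Z‖ - 1) :=
        hS.1.isSelfAdjoint.norm_mul_exp_mul_sub_le Z
    _ ≤ ‖S * S‖ * (fNorm Z * Real.exp (fNorm Z)) := by gcongr
    _ = ‖S * S‖ * Real.exp (fNorm Z) * fNorm Z := by ring

/-- Key estimate in Lemma `delta_upper_lower`:
for positive definite `V` with psd square root `S` (so `U = S·exp(Z)·S`),
`‖S·exp(Z)·S − V‖ ≤ ‖V‖·e^{‖Z‖_F}·‖Z‖_F`. -/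
theorem exp_conj_sub_norm_bound {n : ℕ} (V S Z : Matrix (Fin n) (Fin n) ℝ)
    (hV : V.PosDef) (hS : S.PosSemidef) (hSV : S * S = V) :
    sNorm (S * NormedSpace.exp Z * S - V)
      ≤ sNorm V * Real.exp (fNorm Z) * fNorm Z :=
  exp_conj_sub_norm_bound_general V S Z hS hSV
end
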